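/- Define numbers c(n,j) for n, j >= 0 by c(0,j) = [j = 0], c(n,0) = c(n-1,0) + c(n-1,1), and c(n,j) = c(n-1,j-1) + c(n-1,j+1) for j >= 1. Then c(n,j) = C(n, floor((n-j)/2)) whenever n and j have the same parity or n >= j, and in particular c(n,0) = C(n, floor(n/2)). -/
import Mathlib

/-- Counts of nonnegative lattice paths from `(0,0)` to `(n,j)` with up-steps,
down-steps, and horizontal steps allowed only at height `0`:
`c 0 j = [j = 0]`, `c n 0 = c (n-1) 0 + c (n-1) 1`,
`c n j = c (n-1) (j-1) + c (n-1) (j+1)` for `j ≥ 1`. -/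
def pathCount : ℕ → ℕ → ℕ
  | 0, j => if j = 0 then 1 else 0
  | n + 1, 0 => pathCount n 0 + pathCount n 1
  | n + 1, j + 1 => pathCount n j + pathCount n (j + 2)

/-- Binomial coefficient `C(n,k)` with integer lower index, equal to `0` for `k < 0`
(and automatically `0` for `k > n`). -/
def intChoose (n : ℕ) (k : ℤ) : ℤ :=
  if 0 ≤ k then (n.choose k.toNat : ℤ) else 0

lemma intChoose_pascal (n : ℕ) (k : ℤ) :
    intChoose (n + 1) k = intChoose n k + intChoose n (k - 1) := by
  unfold intChoose
  rcases lt_trichotomy k 0 with h | h | h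
  · rw [if_neg (by omega), if_neg (by omega), if_neg (by omega)]; ring
  · subst h; simp
  · rw [if_pos (by omega), if_pos (by omega), if_pos (by omega)]
    have h1 : k.toNat = (k - 1).toNat + 1 := by omega
    rw [h1, Nat.choose_succ_succ]
    push_cast; ring

lemma intChoose_symm (n : ℕ) (k : ℤ) (h1 : 0 ≤ k) (h2 : k ≤ n) :
    intChoose n k = intChoose n ((n : ℤ) - k) := by
  unfold intChoose
  rw [if_pos h1, if_pos (by omega)]
  have h3 : ((n : ℤ) - k).toNat = n - k.toNat := by omega
  rw [h3, Nat.choose_symm (by omega)]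

lemma pathCount_main (n j : ℕ) :
    (pathCount n j : ℤ) = intChoose n (((n : ℤ) - j) / 2) := by
  induction n generalizing j with
  | zero =>
    cases j with
    | zero => simp [pathCount, intChoose]
    | succ m =>
      have h0 : pathCount 0 (m + 1) = 0 := rfl
      rw [h0]
      unfold intChoose
      rw [if_neg (by omega)]
      simp
  | succ n ih =>
    cases j with
    | zero =>
      show ((pathCount n 0 + pathCount n 1 : ℕ) : ℤ) = _
      push_cast [ih]
      rw [intChoose_pascal]
      rcases Nat.even_or_odd n with ⟨a, ha⟩ | ⟨a, ha⟩
      · have e1 : ((n : ℤ) + 1 - 0) / 2 = ((n : ℤ) - 0) / 2 := by omega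
        rw [e1]
        have e2 : ((n : ℤ) - 1) / 2 = ((n : ℤ) - 0) / 2 - 1 := by omega
        rw [e2]
      · have e1 : ((n : ℤ) + 1 - 0) / 2 = (a : ℤ) + 1 := by omega
        have e2 : ((n : ℤ) + 1 - 0) / 2 - 1 = (a : ℤ) := by omega
        have e3 : ((n : ℤ) - 0) / 2 = (a : ℤ) := by omega
        have e4 : ((n : ℤ) - 1) / 2 = (a : ℤ) := by omega
        rw [e1, show ((a : ℤ) + 1 - 1) = (a : ℤ) from by ring, e3, e4]
        have := intChoose_symm n ((a : ℤ) + 1) (by positivity) (by omega)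
        have e5 : (n : ℤ) - ((a : ℤ) + 1) = (a : ℤ) := by omega
        rw [e5] at this
        rw [this]
    | succ m =>
      show ((pathCount n m + pathCount n (m + 2) : ℕ) : ℤ) = _
      push_cast [ih]
      rw [intChoose_pascal]
      have e1 : ((n : ℤ) + 1 - ((m : ℤ) + 1)) / 2 = ((n : ℤ) - m) / 2 := by omega
      rw [e1]
      have e2 : ((n : ℤ) - ((m : ℤ) + 2)) / 2 = ((n : ℤ) - (m : ℤ)) / 2 - 1 := by omega
      rw [e2]

/-- `c(n,j) = C(n, ⌊(n-j)/2⌋)` whenever `n` and `j` have the same parity or `n ≥ j`;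
in particular `c(n,0) = C(n, ⌊n/2⌋)`. -/
theorem pathCount_eq_choose :
    (∀ n j : ℕ, n % 2 = j % 2 ∨ j ≤ n →
        (pathCount n j : ℤ) = intChoose n (((n : ℤ) - j) / 2)) ∧
      ∀ n : ℕ, pathCount n 0 = n.choose (n / 2) := by
  constructor
  · intro n j _
    exact pathCount_main n j
  · intro n
    have h := pathCount_main n 0
    push_cast at h
    have h2 : ((n : ℤ) - 0) / 2 = ((n / 2 : ℕ) : ℤ) := by omega
    rw [h2] at h
    unfold intChoose at h
    rw [if_pos (by positivity)] at h
    simp at h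
    exact_mod_cast h
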